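/- Let p : X̃ → X be a semicovering map with p(x̃₀)=x₀, let H̃ ≤ π₁(X̃,x̃₀) and H = p∗(H̃). If X is a strong H-SLT space, then X̃ is a strong H̃-SLT space. -/

import Mathlib

open CategoryTheory unitInterval
open scoped Topology

attribute [local instance] Path.Homotopic.setoid

noncomputable section

/-- The homotopy class of a loop as an element of the fundamental group. -/
def loopClass {X : Type*} [TopologicalSpace X] {x : X} (γ : Path x x) :
    FundamentalGroup X x :=
  ((CategoryTheory.Groupoid.isoEquivHom (FundamentalGroupoid.mk x) (FundamentalGroupoid.mk x)).symm
    (⟦γ⟧ : Path.Homotopic.Quotient x x)).hom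

variable {X : Type*} [TopologicalSpace X]

/-- The Spanier group of a family of subsets of `X`, based at `x`: the subgroup generated by
classes `[α∗β∗α⁻¹]` where `α` is a path from `x` and `β` is a loop inside a member of `𝒰`. -/
def spanierGroupAt (x : X) (𝒰 : Set (Set X)) : Subgroup (FundamentalGroup X x) :=
  Subgroup.closure {g | ∃ (y : X) (α : Path x y) (β : Path y y) (U : Set X),
    U ∈ 𝒰 ∧ (∀ t, β t ∈ U) ∧ g = loopClass (α.trans (β.trans α.symm))}

/-- `𝒰` is an open cover of `X`. -/
def IsOpenCover (𝒰 : Set (Set X)) : Prop := (∀ U ∈ 𝒰, IsOpen U) ∧ ⋃₀ 𝒰 = Set.univ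

/-- `X` is a strong `H`-SLT space at `x₀`: for every `x ∈ X` and every open neighborhood `U`
of `x₀` there is an open neighborhood `V` of `x` such that for every loop `β` in `V` based at
`x` and every path `α` from `x₀` to `x` there is a loop `λ` in `U` based at `x₀` with
`[α∗β∗α⁻¹∗λ⁻¹] ∈ H`. -/
def StrongHSLTAt (x₀ : X) (H : Subgroup (FundamentalGroup X x₀)) : Prop :=
  ∀ (x : X) (U : Set X), IsOpen U → x₀ ∈ U →
    ∃ V : Set X, IsOpen V ∧ x ∈ V ∧
      ∀ (β : Path x x), (∀ t, β t ∈ V) → ∀ (α : Path x₀ x),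
        ∃ lam : Path x₀ x₀, (∀ t, lam t ∈ U) ∧
          loopClass (α.trans (β.trans α.symm)) * (loopClass lam)⁻¹ ∈ H

/-- The conjugate subgroup `[δ⁻¹ H δ]` of the fundamental group at the endpoint of `δ`. -/
def conjSubgroup {x₀ x : X} (δ : Path x₀ x) (H : Subgroup (FundamentalGroup X x₀)) :
    Subgroup (FundamentalGroup X x) :=
  H.map (FundamentalGroup.fundamentalGroupMulEquivOfPath δ).toMonoidHom

/-- `X` is a strong `H`-SLT space: for every `x ∈ X` and every path `δ` from `x₀` to `x`,
`X` is a strong `[δ⁻¹Hδ]`-SLT space at `x`. -/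
def StrongHSLT (x₀ : X) (H : Subgroup (FundamentalGroup X x₀)) : Prop :=
  ∀ (x : X) (δ : Path x₀ x), StrongHSLTAt x (conjSubgroup δ H)

/-- A semicovering map: a local homeomorphism with unique continuous lifting of paths
and of homotopies. -/
structure IsSemicoveringMap {E : Type*} [TopologicalSpace E] (p : E → X) : Prop where
  isLocalHomeomorph : IsLocalHomeomorph p
  path_lift : ∀ (γ : C(I, X)) (e : E), p e = γ 0 →
    ∃! γ' : C(I, E), p ∘ γ' = γ ∧ γ' 0 = e
  homotopy_lift : ∀ (Hm : C(I × I, X)) (e : E), p e = Hm (0, 0) →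
    ∃! H' : C(I × I, E), p ∘ H' = Hm ∧ H' (0, 0) = e

/-!
Given an open neighbourhood `U` of `e`, shrink it to a sheet `W ⊆ U` on which `p` is a
homeomorphism onto the open set `p W`, and apply the strong `H`-SLT property of `X` at `p e`
(along the path `p ∘ δ`) to `p W`; the preimage of the resulting `V` works upstairs. Indeed the
loop `λ'` in `p W` provided downstairs lifts through the sheet to a loop `λ` in `U`, and `p∗`
carries the class `[α∗β∗α⁻¹∗λ⁻¹]` into `p∗[δ⁻¹H̃δ] = [(p∘δ)⁻¹H(p∘δ)]`. Since `p∗` is injective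
(lift homotopies; their boundary edges are lifts of paths, hence determined by unique path
lifting), the class already lies in `[δ⁻¹H̃δ]`.
-/

section LoopClass

variable {Y : Type*} [TopologicalSpace Y] {x y : X}

theorem loopClass_surjective : Function.Surjective (loopClass (x := x)) :=
  Quotient.ind fun γ ↦ ⟨γ, rfl⟩

theorem loopClass_eq_loopClass_iff {γ γ' : Path x x} :
    loopClass γ = loopClass γ' ↔ γ.Homotopic γ' :=
  Quotient.eq

theorem fundamentalGroupMulEquivOfPath_loopClass (δ : Path x y) (γ : Path x x) :
    FundamentalGroup.fundamentalGroupMulEquivOfPath δ (loopClass γ) =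
      loopClass (δ.symm.trans (γ.trans δ)) :=
  rfl

theorem FundamentalGroup.map_loopClass (f : C(X, Y)) (γ : Path x x) :
    FundamentalGroup.map f x (loopClass γ) = loopClass (γ.map f.continuous) :=
  rfl

theorem conjSubgroup_map (f : C(X, Y)) (δ : Path x y) (H : Subgroup (FundamentalGroup X x)) :
    conjSubgroup (δ.map f.continuous) (H.map (FundamentalGroup.map f x)) =
      (conjSubgroup δ H).map (FundamentalGroup.map f y) := by
  simp only [conjSubgroup, Subgroup.map_map]
  congr 1
  ext g
  obtain ⟨γ, rfl⟩ := loopClass_surjective g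
  simp only [MonoidHom.comp_apply, MulEquiv.coe_toMonoidHom, FundamentalGroup.map_loopClass,
    fundamentalGroupMulEquivOfPath_loopClass, Path.map_trans, Path.map_symm]

end LoopClass

theorem OpenPartialHomeomorph.exists_path_lift {E : Type*} [TopologicalSpace E] {p : E → X}
    (hp : Continuous p) (W : OpenPartialHomeomorph E X) (hpW : Set.EqOn p W W.source)
    {a b : E} (ha : a ∈ W.source) (hb : b ∈ W.source) (γ : Path (p a) (p b))
    (hγ : ∀ t, γ t ∈ W.target) :
    ∃ γ' : Path a b, (∀ t, γ' t ∈ W.source) ∧ γ'.map hp = γ := by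
  have hsymm : ∀ {c}, c ∈ W.source → W.symm (p c) = c := fun hc ↦ by
    rw [hpW hc, W.left_inv hc]
  refine ⟨⟨⟨W.symm ∘ γ, W.continuousOn_symm.comp_continuous γ.continuous hγ⟩, ?_, ?_⟩,
    fun t ↦ W.map_target (hγ t), ?_⟩
  · simpa using hsymm ha
  · simpa using hsymm hb
  · ext t
    simp only [Path.map_coe, Function.comp_apply, Path.coe_mk_mk]
    rw [hpW (W.map_target (hγ t)), W.right_inv (hγ t)]

namespace IsSemicoveringMap

variable {E : Type*} [TopologicalSpace E] {p : E → X}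

theorem eq_of_comp_eq (hp : IsSemicoveringMap p) {u v : C(I, E)} (h : p ∘ u = p ∘ v)
    (h₀ : u 0 = v 0) : u = v := by
  obtain ⟨_, -, huniq⟩ :=
    hp.path_lift ⟨p ∘ u, hp.isLocalHomeomorph.continuous.comp u.continuous⟩ (u 0) rfl
  exact (huniq u ⟨rfl, rfl⟩).trans (huniq v ⟨h.symm, h₀.symm⟩).symm

theorem homotopic_of_map_homotopic (hp : IsSemicoveringMap p) (hc : Continuous p) {a b : E}
    {γ γ' : Path a b} (h : (γ.map hc).Homotopic (γ'.map hc)) : γ.Homotopic γ' := by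
  obtain ⟨F⟩ := h
  obtain ⟨F', ⟨hF'p, hF'₀⟩, -⟩ := hp.homotopy_lift F.toContinuousMap a (by simp)
  have edge : ∀ (c : C(I, I × I)) (u : C(I, E)), (∀ s, F (c s) = p (u s)) →
      F' (c 0) = u 0 → ∀ s, F' (c s) = u s := fun c u hcu h₀ ↦
    DFunLike.congr_fun <| hp.eq_of_comp_eq (u := F'.comp c)
      (funext fun s ↦ (congrFun hF'p (c s)).trans (hcu s)) h₀
  have bottom : ∀ s, F' (s, 0) = a :=
    edge ⟨fun s ↦ (s, 0), by fun_prop⟩ (.const I a) (by simp) hF'₀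
  have left : ∀ t, F' (0, t) = γ t :=
    edge ⟨fun t ↦ (0, t), by fun_prop⟩ γ (by simp) (by simpa using hF'₀)
  have right : ∀ t, F' (1, t) = γ' t :=
    edge ⟨fun t ↦ (1, t), by fun_prop⟩ γ' (by simp) (by simpa using bottom 1)
  have top : ∀ s, F' (s, 1) = b :=
    edge ⟨fun s ↦ (s, 1), by fun_prop⟩ (.const I b) (by simp) (by simpa using left 1)
  exact ⟨{ toContinuousMap := F'
           map_zero_left := left
           map_one_left := right
           prop' := by rintro t x (rfl | rfl) <;> simp [bottom, top] }⟩

theorem fundamentalGroup_map_injective (hp : IsSemicoveringMap p) (hc : Continuous p) (e : E) :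
    Function.Injective (FundamentalGroup.map ⟨p, hc⟩ e) := by
  intro g g' h
  obtain ⟨γ, rfl⟩ := loopClass_surjective g
  obtain ⟨γ', rfl⟩ := loopClass_surjective g'
  rw [FundamentalGroup.map_loopClass, FundamentalGroup.map_loopClass,
    loopClass_eq_loopClass_iff] at h
  exact loopClass_eq_loopClass_iff.2 (hp.homotopic_of_map_homotopic hc h)

end IsSemicoveringMap

theorem semicovering_strongHSLT_lifts
    {E : Type*} [TopologicalSpace E]
    (p : E → X) (hcont : Continuous p) (hp : IsSemicoveringMap p)
    (e₀ : E) (x₀ : X) (he : p e₀ = x₀)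
    (Ht : Subgroup (FundamentalGroup E e₀)) (H : Subgroup (FundamentalGroup X x₀))
    (hH : ∀ g, g ∈ H ↔ ∃ γ : Path e₀ e₀, loopClass γ ∈ Ht ∧
      loopClass ((γ.map hcont).cast he.symm he.symm) = g)
    (hX : StrongHSLT x₀ H) : StrongHSLT e₀ Ht := by
  subst he
  have hH_eq : H = Ht.map (FundamentalGroup.map ⟨p, hcont⟩ e₀) := by
    ext g
    simp only [hH, Subgroup.mem_map, loopClass_surjective.exists, Path.cast_rfl_rfl]
    rfl
  intro e δ e' U hU heU
  obtain ⟨W, heW, hpW⟩ := hp.isLocalHomeomorph e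
  have heW' : e ∈ (W.restrOpen U hU).source := ⟨heW, heU⟩
  obtain ⟨V, hV, he'V, hV_loops⟩ := hX (p e) (δ.map hcont) (p e') _
    (W.restrOpen U hU).open_target (hpW ▸ (W.restrOpen U hU).map_source heW')
  refine ⟨p ⁻¹' V, hV.preimage hcont, he'V, fun β hβ α ↦ ?_⟩
  obtain ⟨lam', hlam'W, hmem⟩ := hV_loops (β.map hcont) hβ (α.map hcont)
  obtain ⟨lam, hlamW, rfl⟩ := (W.restrOpen U hU).exists_path_lift hcont
    (hpW ▸ Set.eqOn_refl _ _) heW' heW' lam' hlam'W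
  refine ⟨lam, fun t ↦ (hlamW t).2, ?_⟩
  rw [← Subgroup.mem_map_iff_mem (hp.fundamentalGroup_map_injective hcont e),
    ← conjSubgroup_map, ← hH_eq]
  simpa only [map_mul, map_inv, FundamentalGroup.map_loopClass, Path.map_trans,
    Path.map_symm] using hmem

end
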